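/- Combining both scattering-matrix symmetries: if z₀ ∈ ℂ \ {0} satisfies s₁₁(z₀) = 0, then s₂₂(z₀*) = 0, s₂₂(-q₀²/z₀) = 0, and s₁₁(-q₀²/z₀*) = 0. Hence discrete eigenvalues occur in quartets {z₀, z₀*, -q₀²/z₀, -q₀²/z₀*}. -/

import Mathlib

/-!
Every matrix in sight — `σ`, `σ₃ Q₋` and `(σ₃ Q₊)⁻¹` — is antidiagonal, and sandwiching a `2 × 2`
matrix between two antidiagonal ones sends its `(1,1)` entry to a multiple of its `(0,0)` entry
and vice versa. So each symmetry moves the zero of `s₁₁` at `z₀` to a zero of `s₂₂` (and back),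
and composing the two symmetries gives the fourth point of the quartet.
-/

namespace Matrix

variable {R : Type*} [CommRing R]

def IsAntidiagFinTwo (A : Matrix (Fin 2) (Fin 2) R) : Prop :=
  A 0 0 = 0 ∧ A 1 1 = 0

namespace IsAntidiagFinTwo

variable {A B : Matrix (Fin 2) (Fin 2) R}

theorem neg (hA : A.IsAntidiagFinTwo) : (-A).IsAntidiagFinTwo := by
  simp [IsAntidiagFinTwo, hA.1, hA.2]

/-- Holds also when `A` is singular, since then `A⁻¹ = 0`. -/
theorem inv (hA : A.IsAntidiagFinTwo) : A⁻¹.IsAntidiagFinTwo := by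
  simp [IsAntidiagFinTwo, inv_def, adjugate_fin_two, hA.1, hA.2]

theorem mul_mul_apply_one_one (hA : A.IsAntidiagFinTwo) (hB : B.IsAntidiagFinTwo)
    (M : Matrix (Fin 2) (Fin 2) R) : (A * M * B) 1 1 = A 1 0 * M 0 0 * B 0 1 := by
  simp [mul_apply, Fin.sum_univ_two, hA.2, hB.2]

theorem mul_mul_apply_zero_zero (hA : A.IsAntidiagFinTwo) (hB : B.IsAntidiagFinTwo)
    (M : Matrix (Fin 2) (Fin 2) R) : (A * M * B) 0 0 = A 0 1 * M 1 1 * B 1 0 := by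
  simp [mul_apply, Fin.sum_univ_two, hA.1, hB.1]

end IsAntidiagFinTwo

end Matrix

open Matrix

theorem stmt_14_general (q₀ : ℝ) (qp qm : ℂ)
    (σ σ₃ Qp Qm : Matrix (Fin 2) (Fin 2) ℂ)
    (hσ : σ = !![0, 1; -1, 0]) (hσ₃ : σ₃ = !![1, 0; 0, -1])
    (hQp : Qp = !![0, qp; -(starRingEnd ℂ qp), 0])
    (hQm : Qm = !![0, qm; -(starRingEnd ℂ qm), 0])
    (S : ℂ → Matrix (Fin 2) (Fin 2) ℂ)
    (hsym1 : ∀ z : ℂ, (S (starRingEnd ℂ z)).map (starRingEnd ℂ) = -σ * S z * σ)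
    (hsym2 : ∀ z : ℂ, z ≠ 0 →
      S (-(q₀ : ℂ)^2 / z) = σ₃ * Qm * S z * (σ₃ * Qp)⁻¹)
    (z₀ : ℂ) (hz₀ : z₀ ≠ 0) (hzero : S z₀ 0 0 = 0) :
    S (starRingEnd ℂ z₀) 1 1 = 0 ∧
    S (-(q₀ : ℂ)^2 / z₀) 1 1 = 0 ∧
    S (-(q₀ : ℂ)^2 / starRingEnd ℂ z₀) 0 0 = 0 := by
  have hσ_anti : σ.IsAntidiagFinTwo := by simp [IsAntidiagFinTwo, hσ]
  have hQm_anti : (σ₃ * Qm).IsAntidiagFinTwo := by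
    simp [IsAntidiagFinTwo, hσ₃, hQm, mul_apply, Fin.sum_univ_two]
  have hQp_inv_anti : (σ₃ * Qp)⁻¹.IsAntidiagFinTwo := by
    refine IsAntidiagFinTwo.inv ?_
    simp [IsAntidiagFinTwo, hσ₃, hQp, mul_apply, Fin.sum_univ_two]
  have h₁ : S (starRingEnd ℂ z₀) 1 1 = 0 := by
    have h := congrFun₂ (hsym1 z₀) 1 1
    rwa [map_apply, hσ_anti.neg.mul_mul_apply_one_one hσ_anti, hzero, mul_zero, zero_mul,
      map_eq_zero] at h
  have h₂ : S (-(q₀ : ℂ)^2 / z₀) 1 1 = 0 := by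
    simpa [hQm_anti.mul_mul_apply_one_one hQp_inv_anti, hzero] using congrFun₂ (hsym2 z₀ hz₀) 1 1
  have h₃ : S (starRingEnd ℂ (-(q₀ : ℂ)^2 / z₀)) 0 0 = 0 := by
    have h := congrFun₂ (hsym1 (-(q₀ : ℂ)^2 / z₀)) 0 0
    rwa [map_apply, hσ_anti.neg.mul_mul_apply_zero_zero hσ_anti, h₂, mul_zero, zero_mul,
      map_eq_zero] at h
  refine ⟨h₁, h₂, ?_⟩
  simpa using h₃

/-- Quartet structure of discrete eigenvalues: combining both scattering-matrix
symmetries, if s₁₁(z₀) = 0 for z₀ ≠ 0 then s₂₂(z₀*) = 0, s₂₂(-q₀²/z₀) = 0 and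
s₁₁(-q₀²/z₀*) = 0. -/
theorem stmt_14 (q₀ : ℝ) (hq₀ : 0 < q₀) (qp qm : ℂ)
    (habsp : ‖qp‖ = q₀) (habsm : ‖qm‖ = q₀)
    (σ σ₃ Qp Qm : Matrix (Fin 2) (Fin 2) ℂ)
    (hσ : σ = !![0, 1; -1, 0]) (hσ₃ : σ₃ = !![1, 0; 0, -1])
    (hQp : Qp = !![0, qp; -(starRingEnd ℂ qp), 0])
    (hQm : Qm = !![0, qm; -(starRingEnd ℂ qm), 0])
    (S : ℂ → Matrix (Fin 2) (Fin 2) ℂ)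
    (hsym1 : ∀ z : ℂ, (S (starRingEnd ℂ z)).map (starRingEnd ℂ) = -σ * S z * σ)
    (hsym2 : ∀ z : ℂ, z ≠ 0 →
      S (-(q₀ : ℂ)^2 / z) = σ₃ * Qm * S z * (σ₃ * Qp)⁻¹)
    (z₀ : ℂ) (hz₀ : z₀ ≠ 0) (hzero : S z₀ 0 0 = 0) :
    S (starRingEnd ℂ z₀) 1 1 = 0 ∧
    S (-(q₀ : ℂ)^2 / z₀) 1 1 = 0 ∧
    S (-(q₀ : ℂ)^2 / starRingEnd ℂ z₀) 0 0 = 0 :=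
  stmt_14_general q₀ qp qm σ σ₃ Qp Qm hσ hσ₃ hQp hQm S hsym1 hsym2 z₀ hz₀ hzero
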